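/- Let λ > 1, μ = √(λ²−1), a > 0 with a ≠ 1, and define X : ℝ² → ℝ³ by X(u,v) = ( λ·u − sinh(a u)·sin(a v)/a , [cosh u·((a²−1)·cos v + cosh(a u)·((aμ + λ)·cos v·sin(a v) − (aλ + μ)·sin v·cos(a v))) + sinh u·sinh(a u)·((aμ + λ)·sin v·cos(a v) − (aλ + μ)·cos v·sin(a v))]/(a²−1) , [sinh u·((a²−1)·cos v + cosh(a u)·((aμ + λ)·cos v·sin(a v) − (aλ + μ)·sin v·cos(a v))) + cosh u·sinh(a u)·((aμ + λ)·sin v·cos(a v) − (aλ + μ)·cos v·sin(a v))]/(a²−1) ). Then: (i) each coordinate function of X is harmonic on ℝ² (∂²X_k/∂u² + ∂²X_k/∂v² = 0); (ii) X is Lorentz-conformal, i.e. ⟨X_u,X_u⟩_L = ⟨X_v,X_v⟩_L and ⟨X_u,X_v⟩_L = 0 everywhere; and (iii) X(u,0) = (λ·u, cosh u, sinh u) for all u ∈ ℝ. -/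

import Mathlib

open Real

/-- Lorentzian inner product on ℝ³: ⟨p,q⟩ = p₁q₁ + p₂q₂ − p₃q₃. -/
noncomputable def lorentz (p q : ℝ × ℝ × ℝ) : ℝ :=
  p.1 * q.1 + p.2.1 * q.2.1 - p.2.2 * q.2.2

/-- First coordinate of the helicoidal helicoid over a helix of type I (spacelike axis). -/
noncomputable def X1 (a lam mu u v : ℝ) : ℝ :=
  lam * u - sinh (a*u) * sin (a*v) / a

/-- Second coordinate of the helicoidal helicoid over a helix of type I (spacelike axis). -/
noncomputable def X2 (a lam mu u v : ℝ) : ℝ :=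
  (cosh u * ((a^2 - 1) * cos v
      + cosh (a*u) * ((a * mu + lam) * cos v * sin (a*v)
        - (a * lam + mu) * sin v * cos (a*v)))
   + sinh u * sinh (a*u) * ((a * mu + lam) * sin v * cos (a*v)
        - (a * lam + mu) * cos v * sin (a*v))) / (a^2 - 1)

/-- Third coordinate of the helicoidal helicoid over a helix of type I (spacelike axis). -/
noncomputable def X3 (a lam mu u v : ℝ) : ℝ :=
  (sinh u * ((a^2 - 1) * cos v
      + cosh (a*u) * ((a * mu + lam) * cos v * sin (a*v)
        - (a * lam + mu) * sin v * cos (a*v)))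
   + cosh u * sinh (a*u) * ((a * mu + lam) * sin v * cos (a*v)
        - (a * lam + mu) * cos v * sin (a*v))) / (a^2 - 1)

/-- Partial derivative of X with respect to u. -/
noncomputable def Xu (a lam mu u v : ℝ) : ℝ × ℝ × ℝ :=
  (deriv (fun s => X1 a lam mu s v) u, deriv (fun s => X2 a lam mu s v) u,
   deriv (fun s => X3 a lam mu s v) u)

/-- Partial derivative of X with respect to v. -/
noncomputable def Xv (a lam mu u v : ℝ) : ℝ × ℝ × ℝ :=
  (deriv (fun t => X1 a lam mu u t) v, deriv (fun t => X2 a lam mu u t) v,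
   deriv (fun t => X3 a lam mu u t) v)

/-!
As a function of `u` alone, each coordinate of `X` is a linear combination of `u`, `1`,
`cosh u`, `sinh u`, `cosh (a u)`, `sinh (a u)` and the four products of a hyperbolic function
of `u` with one of `a u`; as a function of `v` alone it is the analogous combination of `1`,
`cos v`, `sin v`, `cos (a v)`, `sin (a v)` and their products. Both families are closed under
differentiation, so all partial derivatives act linearly on coefficients, and harmonicity becomes
a ring identity.

For conformality, `X_u` and `X_v` are the images under the Lorentz boost of rapidity `u` in the
`(x₂, x₃)`-plane of vectors depending only on `a u`, `v`, `a v`. Boosts preserve `⟨·,·⟩_L`, and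
the remaining identities follow from `cosh² - sinh² = 1`, `cos² + sin² = 1` and `μ² = λ² - 1`.
-/

noncomputable def boost (θ : ℝ) (p : ℝ × ℝ × ℝ) : ℝ × ℝ × ℝ :=
  (p.1, cosh θ * p.2.1 + sinh θ * p.2.2, sinh θ * p.2.1 + cosh θ * p.2.2)

theorem lorentz_boost (θ : ℝ) (p q : ℝ × ℝ × ℝ) :
    lorentz (boost θ p) (boost θ q) = lorentz p q := by
  simp only [lorentz, boost]
  linear_combination (p.2.1 * q.2.1 - p.2.2 * q.2.2) * cosh_sq_sub_sinh_sq θ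

noncomputable def hypCombo (a c₀ c₁ c₂ c₃ c₄ c₅ c₆ c₇ c₈ c₉ s : ℝ) : ℝ :=
  c₀ * s + c₁ + c₂ * cosh s + c₃ * sinh s + c₄ * cosh (a * s) + c₅ * sinh (a * s)
    + c₆ * (cosh s * cosh (a * s)) + c₇ * (cosh s * sinh (a * s))
    + c₈ * (sinh s * cosh (a * s)) + c₉ * (sinh s * sinh (a * s))

noncomputable def trigCombo (a d₁ d₂ d₃ d₄ d₅ d₆ d₇ d₈ d₉ t : ℝ) : ℝ :=
  d₁ + d₂ * cos t + d₃ * sin t + d₄ * cos (a * t) + d₅ * sin (a * t)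
    + d₆ * (cos t * cos (a * t)) + d₇ * (cos t * sin (a * t))
    + d₈ * (sin t * cos (a * t)) + d₉ * (sin t * sin (a * t))

theorem hasDerivAt_hypCombo (a c₀ c₁ c₂ c₃ c₄ c₅ c₆ c₇ c₈ c₉ s : ℝ) :
    HasDerivAt (hypCombo a c₀ c₁ c₂ c₃ c₄ c₅ c₆ c₇ c₈ c₉)
      (hypCombo a 0 c₀ c₃ c₂ (a * c₅) (a * c₄) (a * c₇ + c₈) (a * c₆ + c₉) (c₆ + a * c₉)
        (c₇ + a * c₈) s) s := by
  have hlin : HasDerivAt (fun x : ℝ => a * x) a s := by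
    simpa using (hasDerivAt_id s).const_mul a
  have hc := hasDerivAt_cosh s
  have hs := hasDerivAt_sinh s
  have hca := hlin.cosh
  have hsa := hlin.sinh
  have h := (hasDerivAt_id s).const_mul c₀ |>.add_const c₁ |>.add (hc.const_mul c₂)
    |>.add (hs.const_mul c₃) |>.add (hca.const_mul c₄) |>.add (hsa.const_mul c₅)
    |>.add ((hc.mul hca).const_mul c₆) |>.add ((hc.mul hsa).const_mul c₇)
    |>.add ((hs.mul hca).const_mul c₈) |>.add ((hs.mul hsa).const_mul c₉)
  exact h.congr_deriv (by simp only [hypCombo]; ring)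

theorem hasDerivAt_trigCombo (a d₁ d₂ d₃ d₄ d₅ d₆ d₇ d₈ d₉ t : ℝ) :
    HasDerivAt (trigCombo a d₁ d₂ d₃ d₄ d₅ d₆ d₇ d₈ d₉)
      (trigCombo a 0 d₃ (-d₂) (a * d₅) (-(a * d₄)) (a * d₇ + d₈) (d₉ - a * d₆) (a * d₉ - d₆)
        (-(d₇ + a * d₈)) t) t := by
  have hlin : HasDerivAt (fun x : ℝ => a * x) a t := by
    simpa using (hasDerivAt_id t).const_mul a
  have hc := hasDerivAt_cos t
  have hs := hasDerivAt_sin t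
  have hca := hlin.cos
  have hsa := hlin.sin
  have h := (hasDerivAt_const t d₁).add (hc.const_mul d₂) |>.add (hs.const_mul d₃)
    |>.add (hca.const_mul d₄) |>.add (hsa.const_mul d₅)
    |>.add ((hc.mul hca).const_mul d₆) |>.add ((hc.mul hsa).const_mul d₇)
    |>.add ((hs.mul hca).const_mul d₈) |>.add ((hs.mul hsa).const_mul d₉)
  exact h.congr_deriv (by simp only [trigCombo]; ring)

theorem deriv_hypCombo (a c₀ c₁ c₂ c₃ c₄ c₅ c₆ c₇ c₈ c₉ : ℝ) :
    deriv (hypCombo a c₀ c₁ c₂ c₃ c₄ c₅ c₆ c₇ c₈ c₉)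
      = hypCombo a 0 c₀ c₃ c₂ (a * c₅) (a * c₄) (a * c₇ + c₈) (a * c₆ + c₉) (c₆ + a * c₉)
          (c₇ + a * c₈) :=
  funext fun s => (hasDerivAt_hypCombo a c₀ c₁ c₂ c₃ c₄ c₅ c₆ c₇ c₈ c₉ s).deriv

theorem deriv_trigCombo (a d₁ d₂ d₃ d₄ d₅ d₆ d₇ d₈ d₉ : ℝ) :
    deriv (trigCombo a d₁ d₂ d₃ d₄ d₅ d₆ d₇ d₈ d₉)
      = trigCombo a 0 d₃ (-d₂) (a * d₅) (-(a * d₄)) (a * d₇ + d₈) (d₉ - a * d₆) (a * d₉ - d₆)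
          (-(d₇ + a * d₈)) :=
  funext fun t => (hasDerivAt_trigCombo a d₁ d₂ d₃ d₄ d₅ d₆ d₇ d₈ d₉ t).deriv

section Coordinates

variable (a lam mu u v : ℝ)

theorem X1_eq_hypCombo :
    (fun s => X1 a lam mu s v) = hypCombo a lam 0 0 0 0 (-sin (a * v) / a) 0 0 0 0 := by
  ext s; simp only [X1, hypCombo]; ring

theorem X2_eq_hypCombo :
    (fun s => X2 a lam mu s v) = hypCombo a 0 0 ((a ^ 2 - 1) * cos v / (a ^ 2 - 1)) 0 0 0
      (((a * mu + lam) * cos v * sin (a * v) - (a * lam + mu) * sin v * cos (a * v)) / (a ^ 2 - 1))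
      0 0
      (((a * mu + lam) * sin v * cos (a * v) - (a * lam + mu) * cos v * sin (a * v)) / (a ^ 2 - 1))
      := by
  ext s; simp only [X2, hypCombo]; ring

theorem X3_eq_hypCombo :
    (fun s => X3 a lam mu s v) = hypCombo a 0 0 0 ((a ^ 2 - 1) * cos v / (a ^ 2 - 1)) 0 0 0
      (((a * mu + lam) * sin v * cos (a * v) - (a * lam + mu) * cos v * sin (a * v)) / (a ^ 2 - 1))
      (((a * mu + lam) * cos v * sin (a * v) - (a * lam + mu) * sin v * cos (a * v)) / (a ^ 2 - 1))
      0 := by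
  ext s; simp only [X3, hypCombo]; ring

theorem X1_eq_trigCombo :
    (fun t => X1 a lam mu u t) = trigCombo a (lam * u) 0 0 0 (-sinh (a * u) / a) 0 0 0 0 := by
  ext t; simp only [X1, trigCombo]; ring

theorem X2_eq_trigCombo :
    (fun t => X2 a lam mu u t) = trigCombo a 0 ((a ^ 2 - 1) * cosh u / (a ^ 2 - 1)) 0 0 0 0
      ((cosh u * cosh (a * u) * (a * mu + lam) - sinh u * sinh (a * u) * (a * lam + mu))
        / (a ^ 2 - 1))
      ((sinh u * sinh (a * u) * (a * mu + lam) - cosh u * cosh (a * u) * (a * lam + mu))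
        / (a ^ 2 - 1))
      0 := by
  ext t; simp only [X2, trigCombo]; ring

theorem X3_eq_trigCombo :
    (fun t => X3 a lam mu u t) = trigCombo a 0 ((a ^ 2 - 1) * sinh u / (a ^ 2 - 1)) 0 0 0 0
      ((sinh u * cosh (a * u) * (a * mu + lam) - cosh u * sinh (a * u) * (a * lam + mu))
        / (a ^ 2 - 1))
      ((cosh u * sinh (a * u) * (a * mu + lam) - sinh u * cosh (a * u) * (a * lam + mu))
        / (a ^ 2 - 1))
      0 := by
  ext t; simp only [X3, trigCombo]; ring

theorem X1_harmonic :
    deriv (deriv fun s => X1 a lam mu s v) u + deriv (deriv fun t => X1 a lam mu u t) v = 0 := by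
  rw [X1_eq_hypCombo, X1_eq_trigCombo, deriv_hypCombo, deriv_hypCombo, deriv_trigCombo,
    deriv_trigCombo]
  simp only [hypCombo, trigCombo]
  ring

theorem X2_harmonic :
    deriv (deriv fun s => X2 a lam mu s v) u + deriv (deriv fun t => X2 a lam mu u t) v = 0 := by
  rw [X2_eq_hypCombo, X2_eq_trigCombo, deriv_hypCombo, deriv_hypCombo, deriv_trigCombo,
    deriv_trigCombo]
  simp only [hypCombo, trigCombo]
  ring

theorem X3_harmonic :
    deriv (deriv fun s => X3 a lam mu s v) u + deriv (deriv fun t => X3 a lam mu u t) v = 0 := by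
  rw [X3_eq_hypCombo, X3_eq_trigCombo, deriv_hypCombo, deriv_hypCombo, deriv_trigCombo,
    deriv_trigCombo]
  simp only [hypCombo, trigCombo]
  ring

end Coordinates

noncomputable def XuProfile (a lam mu u v : ℝ) : ℝ × ℝ × ℝ :=
  (lam - cosh (a * u) * sin (a * v),
    sinh (a * u) * (mu * cos v * sin (a * v) - lam * sin v * cos (a * v)),
    cos v + cosh (a * u) * (mu * sin v * cos (a * v) - lam * cos v * sin (a * v)))

noncomputable def XvProfile (a lam mu u v : ℝ) : ℝ × ℝ × ℝ :=
  (-(sinh (a * u) * cos (a * v)),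
    -sin v + cosh (a * u) * (mu * cos v * cos (a * v) + lam * sin v * sin (a * v)),
    -(sinh (a * u) * (lam * cos v * cos (a * v) + mu * sin v * sin (a * v))))

section Profiles

variable {a : ℝ} (lam mu u v : ℝ)

theorem Xu_eq_boost (ha : a ≠ 0) (ha2 : a ^ 2 - 1 ≠ 0) :
    Xu a lam mu u v = boost u (XuProfile a lam mu u v) := by
  rw [Xu, X1_eq_hypCombo, X2_eq_hypCombo, X3_eq_hypCombo, deriv_hypCombo, deriv_hypCombo,
    deriv_hypCombo]
  simp only [hypCombo, boost, XuProfile, Prod.mk.injEq]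
  refine ⟨?_, ?_, ?_⟩ <;> field_simp <;> ring

theorem Xv_eq_boost (ha : a ≠ 0) (ha2 : a ^ 2 - 1 ≠ 0) :
    Xv a lam mu u v = boost u (XvProfile a lam mu u v) := by
  rw [Xv, X1_eq_trigCombo, X2_eq_trigCombo, X3_eq_trigCombo, deriv_trigCombo, deriv_trigCombo,
    deriv_trigCombo]
  simp only [trigCombo, boost, XvProfile, Prod.mk.injEq]
  refine ⟨?_, ?_, ?_⟩ <;> field_simp <;> ring

variable {lam mu}

theorem lorentz_XuProfile_self (hmu : mu ^ 2 = lam ^ 2 - 1) :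
    lorentz (XuProfile a lam mu u v) (XuProfile a lam mu u v)
      = lorentz (XvProfile a lam mu u v) (XvProfile a lam mu u v) := by
  simp only [lorentz, XuProfile, XvProfile]
  linear_combination (-mu ^ 2) * cosh_sq_sub_sinh_sq (a * u)
    - mu ^ 2 * (cosh (a * u) ^ 2 - sinh (a * u) ^ 2) * sin_sq_add_cos_sq (a * v)
    + (sin (a * v) ^ 2 * cosh (a * u) ^ 2 - cos (a * v) ^ 2 * sinh (a * u) ^ 2 - 1) * hmu
    + (-1 + 2 * lam * sin (a * v) * cosh (a * u)
        - cosh (a * u) ^ 2 * (mu ^ 2 * cos (a * v) ^ 2 + lam ^ 2 * sin (a * v) ^ 2)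
        + sinh (a * u) ^ 2 * (mu ^ 2 * sin (a * v) ^ 2 + lam ^ 2 * cos (a * v) ^ 2))
      * sin_sq_add_cos_sq v

theorem lorentz_XuProfile_XvProfile (hmu : mu ^ 2 = lam ^ 2 - 1) :
    lorentz (XuProfile a lam mu u v) (XvProfile a lam mu u v) = 0 := by
  simp only [lorentz, XuProfile, XvProfile]
  linear_combination
    (sinh (a * u) * cos (a * v) * lam - sinh (a * u) * cosh (a * u) * sin (a * v) * cos (a * v))
      * sin_sq_add_cos_sq v
    + sinh (a * u) * cosh (a * u) * sin (a * v) * cos (a * v) * (sin v ^ 2 + cos v ^ 2) * hmu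

end Profiles

theorem X_zero_eq_helix {a : ℝ} (lam mu u : ℝ) (ha2 : a ^ 2 - 1 ≠ 0) :
    (X1 a lam mu u 0, X2 a lam mu u 0, X3 a lam mu u 0) = (lam * u, cosh u, sinh u) := by
  simp only [X1, X2, X3, mul_zero, sin_zero, cos_zero, zero_div, sub_zero, mul_one, add_zero,
    sub_self]
  field_simp

/-- The helicoidal helicoid over a helix of type I is harmonic, Lorentz-conformal, and
contains the helix (λu, cosh u, sinh u). -/
theorem helicoidal_helicoid_spacelike_typeI (a lam mu : ℝ)
    (hlam : 1 < lam) (hmu : mu = Real.sqrt (lam^2 - 1))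
    (ha : 0 < a) (ha1 : a ≠ 1) :
    (∀ u v : ℝ,
      deriv (deriv (fun s => X1 a lam mu s v)) u + deriv (deriv (fun t => X1 a lam mu u t)) v = 0 ∧
      deriv (deriv (fun s => X2 a lam mu s v)) u + deriv (deriv (fun t => X2 a lam mu u t)) v = 0 ∧
      deriv (deriv (fun s => X3 a lam mu s v)) u + deriv (deriv (fun t => X3 a lam mu u t)) v = 0) ∧
    (∀ u v : ℝ,
      lorentz (Xu a lam mu u v) (Xu a lam mu u v) = lorentz (Xv a lam mu u v) (Xv a lam mu u v) ∧
      lorentz (Xu a lam mu u v) (Xv a lam mu u v) = 0) ∧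
    (∀ u : ℝ, (X1 a lam mu u 0, X2 a lam mu u 0, X3 a lam mu u 0) = (lam * u, cosh u, sinh u)) := by
  have ha2 : a ^ 2 - 1 ≠ 0 :=
    sub_ne_zero.2 fun h => ha1 ((pow_eq_one_iff_of_nonneg ha.le two_ne_zero).1 h)
  have hmu2 : mu ^ 2 = lam ^ 2 - 1 := by rw [hmu, sq_sqrt (by nlinarith)]
  refine ⟨fun u v => ⟨X1_harmonic .., X2_harmonic .., X3_harmonic ..⟩, fun u v => ?_,
    fun u => X_zero_eq_helix lam mu u ha2⟩
  simp only [Xu_eq_boost lam mu u v ha.ne' ha2, Xv_eq_boost lam mu u v ha.ne' ha2, lorentz_boost]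
  exact ⟨lorentz_XuProfile_self u v hmu2, lorentz_XuProfile_XvProfile u v hmu2⟩
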